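/- arXiv:math/9901026 — 2 statements merged into one kernel-verified Lean document; each statement's English description precedes it below -/
import Mathlib

section
/- For all 1 ≤ i,j ≤ n, k ∈ ℤ, and nonzero l ∈ ℤ, the commutator identity [a_i(l), x_j⁺(k)] = ([(α_i|α_j)·l]/l) · x_j⁺(k+l) holds in M_{n+1}(R). -/
/-!
`a_i(l)` is a scalar multiple of the diagonal matrix `q^{-l} E_{i,i} - q^l E_{i+1,i+1}`, and the
commutator of a diagonal matrix `diag(d)` with `E_{j,j+1}` is `(d_j - d_{j+1}) E_{j,j+1}`. The
powers of `z` combine as `(q^i z)^l (q^j z)^k = q^{(i-j)l} (q^j z)^{k+l}`, so everything reduces to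
the scalar identity `[l] q^{(i-j)l} (d_j - d_{j+1}) = [(α_i|α_j) l]`, checked in the four cases
`i = j`, `i = j + 1`, `j = i + 1` and `|i - j| ≥ 2` using `[2l] = [l](q^l + q^{-l})` and
`[-l] = -[l]`.
-/

noncomputable section

open LaurentPolynomial

/-- The base field `F = ℚ(q)`. -/
abbrev F : Type := RatFunc ℚ

/-- The Laurent polynomial ring `R = F[z, z⁻¹]`. -/
abbrev R : Type := LaurentPolynomial F

/-- The generator `q` of `ℚ(q)`. -/
def q : F := RatFunc.X

/-- The quantum integer `[m] = (q^m − q^{−m})/(q − q^{−1})`. -/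
def qint (m : ℤ) : F := (q ^ m - q ^ (-m)) / (q - q⁻¹)

/-- The A_n inner product `(α_i|α_j)` on simple roots (1-based indices). -/
def ip (i j : ℕ) : ℤ := if i = j then 2 else if i + 1 = j ∨ j + 1 = i then -1 else 0

/-- The matrix unit `E_{ab} ∈ M_N(R)`, with 1-based labels `a b`. -/
def E (N a b : ℕ) : Matrix (Fin N) (Fin N) R :=
  Matrix.of fun r s => if (r : ℕ) + 1 = a ∧ (s : ℕ) + 1 = b then (1 : R) else 0

/-- The element `(q^c z)^k ∈ R`. -/
def zq (c k : ℤ) : R := C (q ^ (c * k)) * T k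

/-- `x_j⁺(k) = (q^j z)^k E_{j,j+1}` in `M_{n+1}(R)`. -/
def xp (n j : ℕ) (k : ℤ) : Matrix (Fin (n+1)) (Fin (n+1)) R :=
  zq j k • E (n+1) j (j+1)

/-- `x_j⁻(k) = (q^j z)^k E_{j+1,j}` in `M_{n+1}(R)`. -/
def xm (n j : ℕ) (k : ℤ) : Matrix (Fin (n+1)) (Fin (n+1)) R :=
  zq j k • E (n+1) (j+1) j

/-- `a_j(l) = ([l]/l)(q^j z)^l (q^{−l}E_{j,j} − q^l E_{j+1,j+1})` in `M_{n+1}(R)`. -/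
def aop (n j : ℕ) (l : ℤ) : Matrix (Fin (n+1)) (Fin (n+1)) R :=
  (C (qint l / (l : F)) * zq j l) •
    (C (q ^ (-l)) • E (n+1) j j - C (q ^ l) • E (n+1) (j+1) (j+1))

lemma Matrix.diagonal_mul_sub_mul_diagonal_apply {ι α : Type*} [Fintype ι] [DecidableEq ι]
    [CommRing α] (d : ι → α) (M : Matrix ι ι α) (r s : ι) :
    (Matrix.diagonal d * M - M * Matrix.diagonal d) r s = (d r - d s) * M r s := by
  rw [Matrix.sub_apply, Matrix.diagonal_mul, Matrix.mul_diagonal]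
  ring

lemma q_ne_zero : q ≠ 0 := RatFunc.X_ne_zero

lemma qint_zero : qint 0 = 0 := by simp [qint]

lemma qint_neg (l : ℤ) : qint (-l) = -qint l := by
  rw [qint, qint, neg_neg, ← neg_div, neg_sub]

lemma qint_two_mul (l : ℤ) : qint (2 * l) = qint l * (q ^ l + q ^ (-l)) := by
  rw [qint, qint, div_mul_eq_mul_div, two_mul, neg_add, zpow_add₀ q_ne_zero,
    zpow_add₀ q_ne_zero]
  ring

/-- The diagonal entry at 1-based position `m` of `q^{-l} E_{i,i} - q^l E_{i+1,i+1}`. -/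
def cartanDiag (i : ℕ) (l : ℤ) (m : ℕ) : F :=
  if m = i then q ^ (-l) else if m = i + 1 then -q ^ l else 0

lemma cartanDiag_self (i : ℕ) (l : ℤ) : cartanDiag i l i = q ^ (-l) := if_pos rfl

lemma cartanDiag_succ (i : ℕ) (l : ℤ) : cartanDiag i l (i + 1) = -q ^ l := by
  simp [cartanDiag]

lemma cartanDiag_of_ne {i m : ℕ} (l : ℤ) (h₀ : m ≠ i) (h₁ : m ≠ i + 1) :
    cartanDiag i l m = 0 := by
  simp [cartanDiag, h₀, h₁]

lemma qint_mul_cartanDiag_sub (i j : ℕ) (l : ℤ) :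
    qint l * q ^ (((i : ℤ) - j) * l) * (cartanDiag i l j - cartanDiag i l (j + 1)) =
      qint (ip i j * l) := by
  rcases eq_or_ne i j with rfl | hij
  · rw [cartanDiag_self, cartanDiag_succ, ip, if_pos rfl, qint_two_mul]
    simp only [sub_self, zero_mul, zpow_zero]
    ring
  rcases eq_or_ne i (j + 1) with rfl | hij'
  · rw [cartanDiag_of_ne l (by omega) (by omega), cartanDiag_self, ip, if_neg hij,
      if_pos (by omega), neg_one_mul, qint_neg]
    push_cast
    rw [show ((j : ℤ) + 1 - j) * l = l by ring]
    linear_combination (-qint l) * zpow_neg_mul_zpow_self l q_ne_zero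
  rcases eq_or_ne j (i + 1) with rfl | hji
  · rw [cartanDiag_succ, cartanDiag_of_ne l (by omega) (by omega), ip, if_neg hij,
      if_pos (by omega), neg_one_mul, qint_neg]
    push_cast
    rw [show ((i : ℤ) - (i + 1)) * l = -l by ring]
    linear_combination (-qint l) * zpow_neg_mul_zpow_self l q_ne_zero
  · rw [cartanDiag_of_ne l hij.symm hji, cartanDiag_of_ne l (by omega) (by omega), ip, if_neg hij,
      if_neg (by omega), zero_mul, qint_zero]
    ring

lemma zq_mul_zq (a b k l : ℤ) : zq a l * zq b k = C (q ^ ((a - b) * l)) * zq b (k + l) := by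
  have h : q ^ (a * l) * q ^ (b * k) = q ^ ((a - b) * l) * q ^ (b * (k + l)) := by
    rw [← zpow_add₀ q_ne_zero, ← zpow_add₀ q_ne_zero]
    ring_nf
  simp only [zq, T_add]
  rw [mul_mul_mul_comm, ← map_mul, h, map_mul]
  ring

lemma aop_eq_smul_diagonal (n i : ℕ) (l : ℤ) :
    aop n i l = (C (qint l / l) * zq i l) •
      Matrix.diagonal fun r : Fin (n + 1) => C (cartanDiag i l (r + 1)) := by
  rw [aop]
  congr 1
  refine Matrix.ext fun r s => ?_
  rcases eq_or_ne r s with rfl | hrs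
  · simp only [Matrix.sub_apply, Matrix.smul_apply, E, Matrix.of_apply, and_self,
      Matrix.diagonal_apply_eq, cartanDiag, add_left_inj]
    split_ifs <;> simp_all
  · have : (r : ℕ) ≠ s := Fin.val_ne_of_ne hrs
    simp only [Matrix.sub_apply, Matrix.smul_apply, E, Matrix.of_apply,
      Matrix.diagonal_apply_ne _ hrs]
    split_ifs <;> first | omega | simp

lemma xp_apply (n j : ℕ) (k : ℤ) (r s : Fin (n + 1)) :
    xp n j k r s = if (r : ℕ) + 1 = j ∧ (s : ℕ) + 1 = j + 1 then zq j k else 0 := by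
  simp [xp, E]

theorem a_xp_comm_general (n : ℕ) (i j : ℕ) (k l : ℤ) :
    aop n i l * xp n j k - xp n j k * aop n i l =
      C (qint (ip i j * l) / (l : F)) • xp n j (k + l) := by
  rw [aop_eq_smul_diagonal, Matrix.smul_mul, Matrix.mul_smul, ← smul_sub]
  refine Matrix.ext fun r s => ?_
  rw [Matrix.smul_apply, Matrix.diagonal_mul_sub_mul_diagonal_apply, Matrix.smul_apply,
    xp_apply, xp_apply]
  split_ifs with h
  · obtain ⟨hr, hs⟩ := h
    rw [hr, hs, smul_eq_mul, smul_eq_mul, ← map_sub, ← qint_mul_cartanDiag_sub i j l]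
    calc C (qint l / l) * zq i l * (C (cartanDiag i l j - cartanDiag i l (j + 1)) * zq j k)
        = C (qint l / l * (cartanDiag i l j - cartanDiag i l (j + 1))) * (zq i l * zq j k) := by
          rw [map_mul]; ring
      _ = _ := by
          rw [zq_mul_zq, ← mul_assoc, ← map_mul]
          congr 2
          ring
  · simp

/-- `[a_i(l), x_j⁺(k)] = ([(α_i|α_j)l]/l) x_j⁺(k+l)` in `M_{n+1}(R)`. -/
theorem a_xp_comm (n : ℕ) (hn : 1 ≤ n) (i j : ℕ) (hi1 : 1 ≤ i) (hin : i ≤ n)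
    (hj1 : 1 ≤ j) (hjn : j ≤ n) (k l : ℤ) (hl : l ≠ 0) :
    aop n i l * xp n j k - xp n j k * aop n i l =
      C (qint (ip i j * l) / (l : F)) • xp n j (k + l) :=
  a_xp_comm_general n i j k l
end
end

section
/- For all k ∈ ℤ and nonzero l ∈ ℤ, the commutator identity [a*_n(l), x*_n⁺(k)] = ([2l]/l) · x*_n⁺(k+l) holds in M_{2n}(R). -/
noncomputable section

open LaurentPolynomial

/-- Type `C_n⁽¹⁾` dual module: `x*_n⁺(k) = (−q^{−1})(q^{−n+1}z)^k E_{n̄,n}`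
in `M_{2n}(R)`. -/
def xpsC (n : ℕ) (k : ℤ) : Matrix (Fin (2*n)) (Fin (2*n)) R :=
  ((-(C q⁻¹)) * zq (-(n : ℤ) + 1) k) • E (2*n) (n+1) n

/-- Type `C_n⁽¹⁾` dual module:
`a*_n(l) = ([l]/l)(q^{−n+1}z)^l (q^{−l}E_{n̄,n̄} − q^l E_{n,n})` in `M_{2n}(R)`. -/
def asC (n : ℕ) (l : ℤ) : Matrix (Fin (2*n)) (Fin (2*n)) R :=
  (C (qint l / (l : F)) * zq (-(n : ℤ) + 1) l) •
    (C (q ^ (-l)) • E (2*n) (n+1) (n+1) - C (q ^ l) • E (2*n) n n)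

lemma E_mul_E (N a b c d : ℕ) (hb : 1 ≤ b) (hbN : b ≤ N) :
    E N a b * E N c d = if b = c then E N a d else 0 := by
  ext r s
  rw [Matrix.mul_apply]
  rw [Finset.sum_eq_single (⟨b - 1, by omega⟩ : Fin N)]
  · simp only [E, Matrix.of_apply]
    have : (b : ℕ) - 1 + 1 = b := by omega
    split_ifs <;> simp_all
  · intro t _ ht
    have : (t : ℕ) + 1 ≠ b := by
      intro h; apply ht; apply Fin.ext; simp; omega
    simp [E, this]
  · simp

lemma zq_mul (c k l : ℤ) : zq c l * zq c k = zq c (k + l) := by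
  have hq : q ≠ 0 := RatFunc.X_ne_zero
  simp only [zq]
  rw [mul_assoc, mul_comm (T l), mul_assoc, ← T_add, ← mul_assoc, ← map_mul,
    ← zpow_add₀ hq]
  ring_nf

lemma qint_key (l : ℤ) : qint l * (q ^ (-l) + q ^ l) = qint (2 * l) := by
  have hq : q ≠ 0 := RatFunc.X_ne_zero
  simp only [qint, div_mul_eq_mul_div]
  congr 1
  have h1 : q ^ (2 * l) = q ^ l * q ^ l := by rw [two_mul, zpow_add₀ hq]
  have h2 : q ^ (-(2 * l)) = q ^ (-l) * q ^ (-l) := by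
    rw [← zpow_add₀ hq]; ring_nf
  rw [h1, h2]; ring_nf

/-- `[a*_n(l), x*_n⁺(k)] = ([2l]/l) x*_n⁺(k+l)` in `M_{2n}(R)`. -/
theorem asC_xpsC_comm (n : ℕ) (hn : 2 ≤ n) (k l : ℤ) (hl : l ≠ 0) :
    asC n l * xpsC n k - xpsC n k * asC n l =
      C (qint (2 * l) / (l : F)) • xpsC n (k + l) := by
  have h1 : E (2*n) (n+1) (n+1) * E (2*n) (n+1) n = E (2*n) (n+1) n := by
    rw [E_mul_E _ _ _ _ _ (by omega) (by omega), if_pos rfl]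
  have h2 : E (2*n) n n * E (2*n) (n+1) n = 0 := by
    rw [E_mul_E _ _ _ _ _ (by omega) (by omega), if_neg (by omega)]
  have h3 : E (2*n) (n+1) n * E (2*n) (n+1) (n+1) = 0 := by
    rw [E_mul_E _ _ _ _ _ (by omega) (by omega), if_neg (by omega)]
  have h4 : E (2*n) (n+1) n * E (2*n) n n = E (2*n) (n+1) n := by
    rw [E_mul_E _ _ _ _ _ (by omega) (by omega), if_pos rfl]
  simp only [asC, xpsC, Matrix.smul_mul, Matrix.mul_smul, Matrix.sub_mul,
    Matrix.mul_sub, smul_sub, h1, h2, h3, h4, smul_zero, sub_zero, zero_sub]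
  rw [sub_neg_eq_add, smul_smul, smul_smul, smul_smul, smul_smul, smul_smul,
    ← add_smul]
  congr 1
  have hz := zq_mul (-(n : ℤ) + 1) k l
  have hkey := qint_key l
  have : qint (2*l) / (l:F) = (qint l / (l:F)) * (q ^ (-l) + q ^ l) := by
    rw [div_mul_eq_mul_div, hkey]
  rw [this]
  push_cast [map_mul, map_add]
  rw [← hz]
  ring
end
end
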